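/- For every x ∈ S: |N(x) ∩ T| = 0, |N(x) ∩ (S_0 \ (S ∪ T))| = 0, |N(x) ∩ S_4| = |S_4|, and |N(x) ∩ S_2| = ½|S_2|. Consequently S is a Godsil–McKay cell of the orbit partition {S, T, S_0\(S∪T), S_2, S_4}. -/

import Mathlib

open Finset

abbrev F2 := ZMod 2

/-- Vectors in `F_2^{2ν}`, divided into `ν` blocks of length 2. -/
abbrev Vec (ν : ℕ) := Fin ν → Fin 2 → F2

/-- The symplectic form `x^T K y` with `K = I_ν ⊗ R`, `R = [[0,1],[1,0]]`. -/
def sform {ν : ℕ} (x y : Vec ν) : F2 := ∑ l, (x l 0 * y l 1 + x l 1 * y l 0)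

/-- The vertex set of the symplectic graph `Sp(2ν,2)`: nonzero vectors.
Vertices `x, y` are adjacent iff `sform x y = 1`. -/
abbrev Vtx (ν : ℕ) := {x : Vec ν // x ≠ 0}

/-- The weight of a length-2 block. -/
def wt (b : Fin 2 → F2) : ℕ := (univ.filter (fun c => b c ≠ 0)).card

/-- The number of blocks of `x` having weight `w`. -/
def nblk {ν : ℕ} (x : Vec ν) (w : ℕ) : ℕ := (univ.filter (fun l => wt (x l) = w)).card

/-- `x` belongs to the 4-subset `S = {v_1,v_2,v_3,v_4}`. -/
def inS {ν : ℕ} (v : Fin 4 → Vec ν) (x : Vec ν) : Prop := ∃ i, x = v i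

/-- `x` belongs to `T = {v_1+v_2, v_2+v_3, v_3+v_1}`. -/
def inT {ν : ℕ} (v : Fin 4 → Vec ν) (x : Vec ν) : Prop :=
  ∃ i j : Fin 4, i ≠ 3 ∧ j ≠ 3 ∧ i ≠ j ∧ x = v i + v j

/-- The number of indices `j ∈ [4]` with `x^T K v_j = 1`. -/
def cnt {ν : ℕ} (v : Fin 4 → Vec ν) (x : Vec ν) : ℕ :=
  (univ.filter (fun j : Fin 4 => sform x (v j) = 1)).card

instance {ν : ℕ} (v : Fin 4 → Vec ν) : DecidablePred (inS v) := fun _ =>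
  inferInstanceAs (Decidable (∃ _, _))

instance {ν : ℕ} (v : Fin 4 → Vec ν) : DecidablePred (inT v) := fun _ =>
  inferInstanceAs (Decidable (∃ _, _))

/-- The set `S` as a finset of vertices. -/
def Sfin {ν : ℕ} (v : Fin 4 → Vec ν) : Finset (Vtx ν) := univ.filter (fun x => inS v x.1)

/-- The set `T` as a finset of vertices. -/
def Tfin {ν : ℕ} (v : Fin 4 → Vec ν) : Finset (Vtx ν) := univ.filter (fun x => inT v x.1)

/-- The set `S_i` of vertices `x` with `#{j : x^T K v_j = 1} = i`, as a finset. -/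
def Sifin {ν : ℕ} (v : Fin 4 → Vec ν) (i : ℕ) : Finset (Vtx ν) :=
  univ.filter (fun x => cnt v x.1 = i)

/-- The set `S_0 \ (S ∪ T)` as a finset of vertices. -/
def S0'fin {ν : ℕ} (v : Fin 4 → Vec ν) : Finset (Vtx ν) :=
  univ.filter (fun x => cnt v x.1 = 0 ∧ ¬ inS v x.1 ∧ ¬ inT v x.1)

/-- The number of neighbors of the vertex `x` inside the finset `C`. -/
def nbc {ν : ℕ} (x : Vtx ν) (C : Finset (Vtx ν)) : ℕ :=
  (C.filter (fun y => sform x.1 y.1 = 1)).card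

/-- The standing hypotheses on the special 4-subset `S = {v_1,v_2,v_3,v_4}`:
all `v_i` are vertices, `v_1,v_2,v_3` are linearly independent and pairwise
(and self) `K`-orthogonal, and `v_4 = v_1 + v_2 + v_3`. -/
structure SConfig (ν : ℕ) (v : Fin 4 → Vec ν) : Prop where
  hne : ∀ i, v i ≠ 0
  hind : LinearIndependent F2 ![v 0, v 1, v 2]
  horth : ∀ i j : Fin 4, i ≠ 3 → j ≠ 3 → sform (v i) (v j) = 0
  hsum : v 3 = v 0 + v 1 + v 2

/-- `D` is a Godsil–McKay cell with respect to the other cells `cells`: every vertex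
of `D` has `0`, half, or all of each cell in `cells` as neighbors. -/
def IsGMCell {ν : ℕ} (cells : List (Finset (Vtx ν))) (D : Finset (Vtx ν)) : Prop :=
  ∀ x ∈ D, ∀ C ∈ cells, nbc x C = 0 ∨ 2 * nbc x C = C.card ∨ nbc x C = C.card

/-! Every vertex of `S` is `K`-orthogonal to all of `S`, hence to `T`; by the definition of the
`S_i` it is adjacent to none of `S_0` and to all of `S_4`. For `S_2`, take `w` with
`w^T K v_j = 1` for every `j`: it exists because the form is nondegenerate and `v_1, v_2, v_3`
and their sum `v_4` are nonzero. Translation by `w` preserves `S_2` and toggles adjacency to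
each `v_i`, so every `v_i` sees exactly half of `S_2`. -/

lemma ZMod.eq_zero_or_eq_one (a : ZMod 2) : a = 0 ∨ a = 1 := by
  revert a; decide

lemma ZMod.eq_one_iff_ne_zero {a : ZMod 2} : a = 1 ↔ a ≠ 0 := by
  revert a; decide

namespace AddMonoidHom

variable {G : Type*} [AddCommGroup G]

lemma exists_apply_eq_one_of_ne_zero {f : G →+ ZMod 2} (hf : f ≠ 0) : ∃ a, f a = 1 := by
  obtain ⟨a, ha⟩ := DFunLike.ne_iff.mp hf
  exact ⟨a, ZMod.eq_one_iff_ne_zero.mpr ha⟩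

lemma exists_apply_eq_one_and_apply_eq_one {f g : G →+ ZMod 2} (hf : f ≠ 0) (hg : g ≠ 0) :
    ∃ a, f a = 1 ∧ g a = 1 := by
  obtain ⟨p, hp⟩ := exists_apply_eq_one_of_ne_zero hf
  obtain ⟨q, hq⟩ := exists_apply_eq_one_of_ne_zero hg
  rcases ZMod.eq_zero_or_eq_one (g p) with hgp | hgp
  · rcases ZMod.eq_zero_or_eq_one (f q) with hfq | hfq
    · exact ⟨p + q, by simp [hp, hfq], by simp [hq, hgp]⟩
    · exact ⟨q, hfq, hq⟩
  · exact ⟨p, hp, hgp⟩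

lemma exists_apply_eq_one_of_three {f₀ f₁ f₂ : G →+ ZMod 2} (h₀ : f₀ ≠ 0) (h₁ : f₁ ≠ 0)
    (h₂ : f₂ ≠ 0) (h : f₀ + f₁ + f₂ ≠ 0) : ∃ w, f₀ w = 1 ∧ f₁ w = 1 ∧ f₂ w = 1 := by
  obtain ⟨a, ha₀, ha₁⟩ := exists_apply_eq_one_and_apply_eq_one h₀ h₁
  obtain ⟨b, hb₂, hb⟩ := exists_apply_eq_one_and_apply_eq_one h₂ h
  rcases ZMod.eq_zero_or_eq_one (f₂ a) with ha₂ | ha₂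
  · -- `f₀ b = f₁ b` since `(f₀ + f₁ + f₂) b = f₂ b`; if both vanish, `a + b` works.
    rcases ZMod.eq_zero_or_eq_one (f₀ b) with hb₀ | hb₀
    · refine ⟨a + b, ?_, ?_, ?_⟩ <;> simp_all
    · refine ⟨b, hb₀, ?_, hb₂⟩
      simp only [add_apply, hb₀, hb₂] at hb
      grind
  · exact ⟨a, ha₀, ha₁, ha₂⟩

end AddMonoidHom

lemma Finset.two_mul_card_filter_of_involution {α : Type*} {s : Finset α} {p : α → Prop}
    [DecidablePred p] (τ : ∀ a ∈ s, α) (hmem : ∀ a ha, τ a ha ∈ s)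
    (hinvol : ∀ a ha, τ (τ a ha) (hmem a ha) = a) (hflip : ∀ a ha, p (τ a ha) ↔ ¬ p a) :
    2 * #(s.filter p) = #s := by
  have h : #(s.filter p) = #(s.filter (¬ p ·)) := by
    refine Finset.card_bij' (fun a ha => τ a (mem_filter.mp ha).1)
      (fun a ha => τ a (mem_filter.mp ha).1) ?_ ?_ ?_ ?_
    · intro a ha
      obtain ⟨ha, hpa⟩ := mem_filter.mp ha
      exact mem_filter.mpr ⟨hmem a ha, by simpa [hflip a ha] using hpa⟩
    · intro a ha
      obtain ⟨ha, hpa⟩ := mem_filter.mp ha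
      exact mem_filter.mpr ⟨hmem a ha, (hflip a ha).mpr hpa⟩
    · exact fun a _ => hinvol a _
    · exact fun a _ => hinvol a _
  rw [two_mul, ← card_filter_add_card_filter_not (s := s) (p := p), h]

section Symplectic

variable {ν : ℕ}

lemma sform_comm (x y : Vec ν) : sform x y = sform y x := by
  unfold sform; exact sum_congr rfl fun _ _ => by ring

lemma sform_add_left (x y z : Vec ν) : sform (x + y) z = sform x z + sform y z := by
  unfold sform
  rw [← sum_add_distrib]
  exact sum_congr rfl fun _ _ => by simp only [Pi.add_apply]; ring

lemma sform_add_right (x y z : Vec ν) : sform x (y + z) = sform x y + sform x z := by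
  rw [sform_comm, sform_add_left, sform_comm y, sform_comm z]

lemma exists_sform_eq_one_of_ne_zero {z : Vec ν} (hz : z ≠ 0) : ∃ y, sform y z = 1 := by
  obtain ⟨l, c, hlc⟩ : ∃ l c, z l c ≠ 0 := by
    by_contra! h; exact hz (funext fun l => funext (h l))
  refine ⟨fun m d => if m = l ∧ d ≠ c then 1 else 0, ?_⟩
  rw [sform, sum_eq_single l (fun m _ hm => by simp [hm]) (by simp)]
  fin_cases c <;> simpa [ZMod.eq_one_iff_ne_zero] using hlc

def sformLeft (u : Vec ν) : Vec ν →+ F2 :=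
  AddMonoidHom.mk' (sform · u) fun x y => sform_add_left x y u

@[simp]
lemma sformLeft_apply (u y : Vec ν) : sformLeft u y = sform y u := rfl

lemma sformLeft_ne_zero {u : Vec ν} (hu : u ≠ 0) : sformLeft u ≠ 0 := fun h => by
  obtain ⟨y, hy⟩ := exists_sform_eq_one_of_ne_zero hu
  have hy0 : sformLeft u y = 0 := by rw [h, AddMonoidHom.zero_apply]
  rw [sformLeft_apply, hy] at hy0
  exact one_ne_zero hy0

end Symplectic

namespace SConfig

variable {ν : ℕ} {v : Fin 4 → Vec ν}

lemma sform_eq_zero (hv : SConfig ν v) (i j : Fin 4) : sform (v i) (v j) = 0 := by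
  fin_cases i <;> fin_cases j <;>
    simp [hv.hsum, sform_add_left, sform_add_right, hv.horth]

lemma exists_sform_eq_one (hv : SConfig ν v) : ∃ w, ∀ j, sform w (v j) = 1 := by
  have h3 : sformLeft (v 0) + sformLeft (v 1) + sformLeft (v 2) = sformLeft (v 3) := by
    ext y; simp [sformLeft, hv.hsum, sform_add_right]
  obtain ⟨w, h₀, h₁, h₂⟩ := AddMonoidHom.exists_apply_eq_one_of_three
    (sformLeft_ne_zero (hv.hne 0)) (sformLeft_ne_zero (hv.hne 1))
    (sformLeft_ne_zero (hv.hne 2)) (h3 ▸ sformLeft_ne_zero (hv.hne 3))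
  have h₃ : sformLeft (v 3) w = 1 := by
    rw [← h3]; simp only [AddMonoidHom.add_apply, h₀, h₁, h₂]; decide
  refine ⟨w, fun j => ?_⟩
  fin_cases j <;> assumption

end SConfig

section Cells

variable {ν : ℕ} {v : Fin 4 → Vec ν} {x : Vtx ν}

lemma mem_Sfin : x ∈ Sfin v ↔ ∃ i, x.1 = v i := by
  rw [Sfin, mem_filter]; simp [inS]

lemma cnt_zero : cnt v 0 = 0 := by simp [cnt, sform]

lemma sform_eq_zero_of_cnt_eq_zero {y : Vec ν} (h : cnt v y = 0) (j : Fin 4) :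
    sform y (v j) = 0 := by
  rw [cnt, card_filter_eq_zero_iff] at h
  exact (ZMod.eq_zero_or_eq_one _).resolve_right (h j (mem_univ j))

lemma sform_eq_one_of_cnt_eq_four {y : Vec ν} (h : cnt v y = 4) (j : Fin 4) :
    sform y (v j) = 1 :=
  card_filter_eq_iff.mp (h.trans (card_fin 4).symm) j (mem_univ j)

lemma cnt_add_add_cnt_eq_four {w : Vec ν} (hw : ∀ j, sform w (v j) = 1) (y : Vec ν) :
    cnt v (y + w) + cnt v y = 4 := by
  have h : univ.filter (fun j => sform (y + w) (v j) = 1) =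
      univ.filter (fun j => ¬ sform y (v j) = 1) := by
    refine filter_congr fun j _ => ?_
    rw [sform_add_left, hw j]
    rcases ZMod.eq_zero_or_eq_one (sform y (v j)) with h | h <;> simp [h]
  rw [cnt, cnt, h, add_comm, card_filter_add_card_filter_not, card_univ, Fintype.card_fin]

lemma nbc_Tfin_eq_zero (hv : SConfig ν v) (hx : x ∈ Sfin v) : nbc x (Tfin v) = 0 := by
  obtain ⟨i, hi⟩ := mem_Sfin.mp hx
  rw [nbc, card_filter_eq_zero_iff]
  intro y hy
  obtain ⟨a, b, -, -, -, hy⟩ : inT v y.1 := (mem_filter.mp hy).2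
  simp [hi, hy, sform_add_right, hv.sform_eq_zero]

lemma nbc_S0'fin_eq_zero (hx : x ∈ Sfin v) : nbc x (S0'fin v) = 0 := by
  obtain ⟨i, hi⟩ := mem_Sfin.mp hx
  rw [nbc, card_filter_eq_zero_iff]
  intro y hy
  rw [hi, sform_comm, sform_eq_zero_of_cnt_eq_zero (mem_filter.mp hy).2.1]
  exact zero_ne_one

lemma nbc_Sifin_four_eq_card (hx : x ∈ Sfin v) : nbc x (Sifin v 4) = #(Sifin v 4) := by
  obtain ⟨i, hi⟩ := mem_Sfin.mp hx
  rw [nbc, card_filter_eq_iff]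
  intro y hy
  rw [hi, sform_comm]
  exact sform_eq_one_of_cnt_eq_four (mem_filter.mp hy).2 i

/-- Translation by a vector `w` adjacent to all of `S` is an involution of `S_2` that toggles
adjacency to `x`. -/
lemma two_mul_nbc_Sifin_two (hv : SConfig ν v) (hx : x ∈ Sfin v) :
    2 * nbc x (Sifin v 2) = #(Sifin v 2) := by
  obtain ⟨i, hi⟩ := mem_Sfin.mp hx
  obtain ⟨w, hw⟩ := hv.exists_sform_eq_one
  have hcnt : ∀ y ∈ Sifin v 2, cnt v (y.1 + w) = 2 := fun y hy => by
    have := cnt_add_add_cnt_eq_four hw y.1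
    rw [(mem_filter.mp hy).2] at this
    omega
  have hne : ∀ y ∈ Sifin v 2, y.1 + w ≠ 0 := fun y hy h0 => by
    simpa [h0, cnt_zero] using hcnt y hy
  refine two_mul_card_filter_of_involution (fun y hy => ⟨y.1 + w, hne y hy⟩)
    (fun y hy => mem_filter.mpr ⟨mem_univ _, hcnt y hy⟩)
    (fun y _ => Subtype.ext (by simp only; rw [add_assoc, ZModModule.add_self, add_zero]))
    fun y _ => ?_
  rw [sform_add_right, hi, sform_comm (v i) w, hw i]
  rcases ZMod.eq_zero_or_eq_one (sform (v i) y.1) with h | h <;> simp [h]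

end Cells

theorem S_is_GMCell_general (ν : ℕ) (v : Fin 4 → Vec ν) (hv : SConfig ν v) :
    (∀ x ∈ Sfin v,
      nbc x (Tfin v) = 0 ∧ nbc x (S0'fin v) = 0 ∧
      nbc x (Sifin v 4) = (Sifin v 4).card ∧
      2 * nbc x (Sifin v 2) = (Sifin v 2).card) ∧
    IsGMCell [Tfin v, S0'fin v, Sifin v 2, Sifin v 4] (Sfin v) := by
  refine ⟨fun x hx => ⟨nbc_Tfin_eq_zero hv hx, nbc_S0'fin_eq_zero hx,
    nbc_Sifin_four_eq_card hx, two_mul_nbc_Sifin_two hv hx⟩, fun x hx C hC => ?_⟩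
  simp only [List.mem_cons, List.not_mem_nil, or_false] at hC
  rcases hC with rfl | rfl | rfl | rfl
  · exact .inl (nbc_Tfin_eq_zero hv hx)
  · exact .inl (nbc_S0'fin_eq_zero hx)
  · exact .inr (.inl (two_mul_nbc_Sifin_two hv hx))
  · exact .inr (.inr (nbc_Sifin_four_eq_card hx))

/-- For every `x ∈ S`: `x` has no neighbors in `T` and in `S_0 \ (S ∪ T)`, is adjacent
to all of `S_4`, and to exactly half of `S_2`. Consequently `S` is a Godsil–McKay cell
of the orbit partition `{S, T, S_0\(S∪T), S_2, S_4}`. -/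
theorem S_is_GMCell (ν : ℕ) (hν : 3 ≤ ν) (v : Fin 4 → Vec ν) (hv : SConfig ν v) :
    (∀ x ∈ Sfin v,
      nbc x (Tfin v) = 0 ∧ nbc x (S0'fin v) = 0 ∧
      nbc x (Sifin v 4) = (Sifin v 4).card ∧
      2 * nbc x (Sifin v 2) = (Sifin v 2).card) ∧
    IsGMCell [Tfin v, S0'fin v, Sifin v 2, Sifin v 4] (Sfin v) :=
  S_is_GMCell_general ν v hv
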